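/- Let S be a nonempty subset of [m] and V a C^m_G-module. If V is S-torsion free, then Σ_i V is S-torsion free for every i ∈ S. -/

import Mathlib

open CategoryTheory Limits
open scoped TensorProduct
noncomputable section

@[ext] structure FIObj where
  n : ℕ

instance : Category FIObj where
  Hom a b := Fin a.n ↪ Fin b.n
  id _ := Function.Embedding.refl _
  comp f g := f.trans g

@[ext] structure FImObj (m : ℕ) where
  comp : Fin m → ℕ

instance (m : ℕ) : Category (FImObj m) where
  Hom x y := ∀ j, Fin (x.comp j) ↪ Fin (y.comp j)
  id _ := fun _ => Function.Embedding.refl _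
  comp f g := fun j => (f j).trans (g j)

abbrev FImG (m : ℕ) (G : Type) [Group G] := FImObj m × CategoryTheory.SingleObj G

@[simp] lemma FImObj.comp_def {m : ℕ} {x y z : FImObj m} (f : x ⟶ y) (g : y ⟶ z) (j : Fin m) :
    (f ≫ g) j = (f j).trans (g j) := rfl

@[simp] lemma FImObj.id_def {m : ℕ} (x : FImObj m) (j : Fin m) :
    (𝟙 x : x ⟶ x) j = Function.Embedding.refl _ := rfl

def shiftEmb (K : ℕ) {a b : ℕ} (f : Fin a ↪ Fin b) : Fin (a + K) ↪ Fin (b + K) :=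
  finSumFinEquiv.symm.toEmbedding.trans
    ((f.sumMap (Function.Embedding.refl (Fin K))).trans finSumFinEquiv.toEmbedding)

@[simp] lemma shiftEmb_castAdd (K : ℕ) {a b : ℕ} (f : Fin a ↪ Fin b) (x : Fin a) :
    shiftEmb K f (Fin.castAdd K x) = Fin.castAdd K (f x) := by
  simp [shiftEmb]

lemma shiftEmb_id (K a : ℕ) :
    shiftEmb K (Function.Embedding.refl (Fin a)) = Function.Embedding.refl _ := by
  ext x
  obtain ⟨y, rfl⟩ := finSumFinEquiv.surjective x
  cases y <;> simp [shiftEmb]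

lemma shiftEmb_trans (K : ℕ) {a b c : ℕ} (f : Fin a ↪ Fin b) (g : Fin b ↪ Fin c) :
    shiftEmb K (f.trans g) = (shiftEmb K f).trans (shiftEmb K g) := by
  ext x
  obtain ⟨y, rfl⟩ := finSumFinEquiv.surjective x
  cases y <;> simp [shiftEmb]

def addF (m : ℕ) (e : Fin m → ℕ) : FImObj m ⥤ FImObj m where
  obj x := ⟨fun j => x.comp j + e j⟩
  map f := fun j => shiftEmb (e j) (f j)
  map_id x := funext fun j => shiftEmb_id _ _
  map_comp f g := funext fun j => shiftEmb_trans _ _ _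

variable (m : ℕ) (G : Type) [Group G] (k : Type) [Field k]

/-- The `i`-th self-embedding functor `ι_i` (more generally, the self-embedding functor
attached to a vector `e` of shifts), extended to `C^m_G` by the identity on `G`. -/
def addFG (e : Fin m → ℕ) : FImG m G ⥤ FImG m G := (addF m e).prod (𝟭 _)

/-- The category of `C^m_G`-modules over `k`, i.e. of functors `C^m_G ⥤ Vect_k`. -/
abbrev ModG := FImG m G ⥤ ModuleCat.{0} k

instance : HasFiniteBiproducts (ModG m G k) := Abelian.hasFiniteBiproducts

/-- The shift functor attached to a shift vector `e`, given by precomposition with the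
self-embedding functor; `Σ_i` is recovered as `e = Pi.single i 1`. -/
def sigmaF (e : Fin m → ℕ) : ModG m G k ⥤ ModG m G k :=
  (Functor.whiskeringLeft _ _ _).obj (addFG m G e)

/-- The canonical morphism `x ⟶ ι_e(x)` in `C^m_G`. -/
def incHom (e : Fin m → ℕ) (x : FImG m G) : x ⟶ (addFG m G e).obj x :=
  (fun j => ⟨Fin.castAdd (e j), fun u v huv => by
      simpa [Fin.ext_iff] using congrArg Fin.val huv⟩, (1 : G))

lemma incHom_naturality (e : Fin m → ℕ) {x y : FImG m G} (f : x ⟶ y) :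
    incHom m G e x ≫ (addFG m G e).map f = f ≫ incHom m G e y := by
  refine Prod.ext ?_ ?_
  · funext j
    ext t
    simp [incHom, addFG, addF, Function.Embedding.trans_apply]
    exact congrArg Fin.val (shiftEmb_castAdd _ _ _)
  · simp [incHom, addFG, CategoryTheory.SingleObj.comp_as_mul]

/-- The natural inclusion `V ⟶ Σ_e V`. -/
def incMapV (e : Fin m → ℕ) (V : ModG m G k) : V ⟶ (sigmaF m G k e).obj V where
  app x := V.map (incHom m G e x)
  naturality x y f := by
    dsimp [sigmaF]
    rw [← V.map_comp, ← V.map_comp, incHom_naturality]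

/-- The natural transformation `𝟭 ⟶ Σ_e` on the category of `C^m_G`-modules. -/
def incNat (e : Fin m → ℕ) : 𝟭 (ModG m G k) ⟶ sigmaF m G k e where
  app V := incMapV m G k e V
  naturality V W φ := by
    apply NatTrans.ext; funext x
    exact (φ.naturality (incHom m G e x)).symm

/-- The kernel functor value `K_e V`, the kernel of the natural map `V ⟶ Σ_e V`;
the `i`-th kernel functor `K_i` of the paper is recovered with `e = Pi.single i 1`. -/
def Kobj (e : Fin m → ℕ) (V : ModG m G k) : ModG m G k :=
  kernel (incMapV m G k e V)

/-- The derivative functor `D_e`, sending `V` to the cokernel of `V ⟶ Σ_e V`;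
the `i`-th derivative functor `D_i` of the paper is recovered with `e = Pi.single i 1`. -/
def Dfun (e : Fin m → ℕ) : ModG m G k ⥤ ModG m G k where
  obj V := cokernel (incMapV m G k e V)
  map {V W} φ := cokernel.map _ _ φ ((sigmaF m G k e).map φ)
    ((incNat m G k e).naturality φ).symm
  map_id X := coequalizer.hom_ext (by simp [cokernel.map])
  map_comp f g := coequalizer.hom_ext (by simp [cokernel.map])

instance sigmaF_additive (e : Fin m → ℕ) : (sigmaF m G k e).Additive :=
  ⟨by intros; apply NatTrans.ext; funext x; rfl⟩

instance Dfun_pzm (e : Fin m → ℕ) : (Dfun m G k e).PreservesZeroMorphisms where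
  map_zero X Y := coequalizer.hom_ext (by simp [Dfun, cokernel.map]; exact Limits.comp_zero.symm)

/-- The functor `D_S = ⊕_{i ∈ S} D_i`. -/
def DSfun (S : Finset (Fin m)) : ModG m G k ⥤ ModG m G k where
  obj V := ⨁ (fun i : {i // i ∈ S} => (Dfun m G k (Pi.single i.1 1)).obj V)
  map φ := biproduct.map (fun i => (Dfun m G k (Pi.single i.1 1)).map φ)
  map_id X := by ext i; simp
  map_comp f g := by ext i; simp

instance DSfun_pzm (S : Finset (Fin m)) : (DSfun m G k S).PreservesZeroMorphisms where
  map_zero X Y := by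
    apply biproduct.hom_ext
    intro i
    simp [DSfun]
    exact Limits.zero_comp.symm

/-- The `S`-degree of a morphism `α : x ⟶ y` in `C^m_G`:
`deg_S(α) = ∑_{i ∈ S} (y_i − x_i)`. -/
def degS (S : Finset (Fin m)) {x y : FImG m G} (_ : x ⟶ y) : ℤ :=
  ∑ i ∈ S, ((y.1.comp i : ℤ) - (x.1.comp i : ℤ))

/-- An element `v ∈ V(x)` is `S`-torsion if some morphism `α` with `deg_S(α) > 0` and
`deg_{[m]∖S}(α) = 0` kills it. -/
def IsTorsionElt (S : Finset (Fin m)) (V : ModG m G k) {x : FImG m G} (v : V.obj x) : Prop :=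
  ∃ (y : FImG m G) (α : x ⟶ y),
    0 < degS m G S α ∧ degS m G Sᶜ α = 0 ∧ V.map α v = 0

/-- A `C^m_G`-module is `S`-torsion free if it has no nonzero `S`-torsion element. -/
def STorsionFree (S : Finset (Fin m)) (V : ModG m G k) : Prop :=
  ∀ (x : FImG m G) (v : V.obj x), IsTorsionElt m G k S V v → v = 0

/-- The free (projective) module `M(x)`, the `k`-linearization of the representable
functor at the object `x`. -/
def RepM (x : FImG m G) : ModG m G k :=
  coyoneda.obj (Opposite.op x) ⋙ ModuleCat.free k

/-- A `C^m_G`-module is finitely generated if it is a quotient of a finite direct sum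
of linearizations of representable functors. -/
def FinitelyGenerated (V : ModG m G k) : Prop :=
  ∃ (r : ℕ) (xs : Fin r → FImG m G) (p : (⨁ fun a => RepM m G k (xs a)) ⟶ V), Epi p

/-- The subcategory `R_s = Aut(s) × C^{[m]∖S}_G` of `C^m_G`, realized as the full
subcategory of objects whose `S`-coordinates agree with `s`. -/
def Rcat (S : Finset (Fin m)) (s : Fin m → ℕ) :=
  CategoryTheory.ObjectProperty.FullSubcategory (fun x : FImG m G => ∀ j ∈ S, x.1.comp j = s j)

instance (S : Finset (Fin m)) (s : Fin m → ℕ) : Category (Rcat m G S s) :=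
  CategoryTheory.ObjectProperty.FullSubcategory.category _

/-- The inclusion `R_s ↪ C^m_G`. -/
def inclR (S : Finset (Fin m)) (s : Fin m → ℕ) : Rcat m G S s ⥤ FImG m G :=
  ObjectProperty.ι _

set_option synthInstance.maxHeartbeats 1000000 in
instance hasLKE (S : Finset (Fin m)) (s : Fin m → ℕ) (F : Rcat m G S s ⥤ ModuleCat.{0} k) :
    (inclR m G S s).HasLeftKanExtension F := inferInstance

/-- The induction functor `F_s = M̄(s) ⊗_{R_s} −`, realized as the left Kan extension
along the inclusion `R_s ↪ C^m_G`. -/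
def indF (S : Finset (Fin m)) (s : Fin m → ℕ) :
    (Rcat m G S s ⥤ ModuleCat.{0} k) ⥤ ModG m G k :=
  (inclR m G S s).lan

/-- A module is `S`-induced if it is isomorphic to `F_s(W)` for some object `s` of `C^S`
and some `R_s`-module `W`. -/
def IsInduced (S : Finset (Fin m)) (V : ModG m G k) : Prop :=
  ∃ (s : Fin m → ℕ) (W : Rcat m G S s ⥤ ModuleCat.{0} k),
    Nonempty (V ≅ (indF m G k S s).obj W)

/-- A module is `S`-semi-induced if it has a finite filtration whose successive quotients
are `S`-induced; equivalently (inductively): a zero module is `S`-semi-induced, and any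
extension of an `S`-induced module by an `S`-semi-induced module is `S`-semi-induced. -/
inductive IsSemiInduced (S : Finset (Fin m)) : ModG m G k → Prop
  | of_isZero (V : ModG m G k) : Limits.IsZero V → IsSemiInduced S V
  | step (sc : ShortComplex (ModG m G k)) : sc.ShortExact → IsSemiInduced S sc.X₁ →
      IsInduced m G k S sc.X₃ → IsSemiInduced S sc.X₂

/-- `V` is generated by its slice `V[[s]]` iff the counit `F_s(V[[s]]) ⟶ V` of the
Kan-extension adjunction (induction ⊣ restriction) is an epimorphism. -/
def GeneratedBySlice (S : Finset (Fin m)) (s : Fin m → ℕ) (V : ModG m G k) : Prop :=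
  Epi ((((inclR m G S s).lanAdjunction (ModuleCat.{0} k)).counit).app V)

lemma comp_le_of_hom {x y : FImG m G} (f : x ⟶ y) (i : Fin m) :
    x.1.comp i ≤ y.1.comp i := by
  simpa using Fintype.card_le_of_embedding (f.1 i)

lemma degS_nonneg (S : Finset (Fin m)) {x y : FImG m G} (f : x ⟶ y) :
    0 ≤ degS m G S f := by
  refine Finset.sum_nonneg fun i _ => ?_
  have := comp_le_of_hom m G f i
  omega

lemma degS_comp (S : Finset (Fin m)) {x y z : FImG m G} (f : x ⟶ y) (g : y ⟶ z) :
    degS m G S (f ≫ g) = degS m G S f + degS m G S g := by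
  rw [degS, degS, degS, ← Finset.sum_add_distrib]
  exact Finset.sum_congr rfl fun i _ => by ring

/-- The value at `x` of the submodule `𝔍_S V ⊆ V`, where `𝔍_S` is the two-sided ideal of
the category algebra spanned by all morphisms of positive `S`-degree. -/
def Jsub (S : Finset (Fin m)) (V : ModG m G k) (x : FImG m G) : Submodule k (V.obj x) :=
  ⨆ (y : FImG m G) (α : y ⟶ x) (_ : 0 < degS m G S α), LinearMap.range (V.map α).hom

lemma Jsub_le_comap (S : Finset (Fin m)) (V : ModG m G k) {x x' : FImG m G} (f : x ⟶ x') :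
    Jsub m G k S V x ≤ (Jsub m G k S V x').comap (V.map f).hom := by
  refine iSup_le fun y => iSup_le fun α => iSup_le fun hα => ?_
  rintro v ⟨w, rfl⟩
  have h1 : (V.map f).hom ((V.map α).hom w) = (V.map (α ≫ f)).hom w := by
    rw [V.map_comp]; rfl
  have h2 : 0 < degS m G S (α ≫ f) := by
    rw [degS_comp]
    have := degS_nonneg m G S f
    omega
  refine Submodule.mem_comap.2 ?_
  rw [h1]
  exact Submodule.mem_iSup_of_mem y (Submodule.mem_iSup_of_mem (α ≫ f)
    (Submodule.mem_iSup_of_mem h2 ⟨w, rfl⟩))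

lemma Jsub_le_comap_app (S : Finset (Fin m)) {V W : ModG m G k} (φ : V ⟶ W) (x : FImG m G) :
    Jsub m G k S V x ≤ (Jsub m G k S W x).comap (φ.app x).hom := by
  refine iSup_le fun y => iSup_le fun α => iSup_le fun hα => ?_
  rintro v ⟨w, rfl⟩
  have h1 : (φ.app x).hom ((V.map α).hom w) = (W.map α).hom ((φ.app y).hom w) := by
    have := φ.naturality α
    exact congrFun (congrArg (fun (t : V.obj y ⟶ W.obj x) => ⇑t.hom) this) w
  refine Submodule.mem_comap.2 ?_
  rw [h1]
  exact Submodule.mem_iSup_of_mem y (Submodule.mem_iSup_of_mem α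
    (Submodule.mem_iSup_of_mem hα ⟨_, rfl⟩))

/-- The value of `H_0^S(V) = V/𝔍_S V` as a `C^m_G`-module. -/
def H0Sobj (S : Finset (Fin m)) (V : ModG m G k) : ModG m G k where
  obj x := ModuleCat.of k (V.obj x ⧸ Jsub m G k S V x)
  map {x x'} f := ModuleCat.ofHom (Submodule.mapQ _ _ (V.map f).hom (Jsub_le_comap m G k S V f))
  map_id x := by
    apply ModuleCat.hom_ext
    apply Submodule.linearMap_qext
    ext v
    show Submodule.Quotient.mk ((V.map (𝟙 x)).hom v) = Submodule.Quotient.mk v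
    rw [V.map_id]
    rfl
  map_comp {x y z} f g := by
    apply ModuleCat.hom_ext
    apply Submodule.linearMap_qext
    ext v
    show Submodule.Quotient.mk ((V.map (f ≫ g)).hom v)
      = Submodule.Quotient.mk ((V.map g).hom ((V.map f).hom v))
    rw [V.map_comp]
    rfl

/-- The functor `H_0^S`, sending `V` to `V/𝔍_S V`. -/
def H0S (S : Finset (Fin m)) : ModG m G k ⥤ ModG m G k where
  obj V := H0Sobj m G k S V
  map {V W} φ :=
    { app := fun x => ModuleCat.ofHom (Submodule.mapQ _ _ (φ.app x).hom (Jsub_le_comap_app m G k S φ x))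
      naturality := fun x y f => by
        apply ModuleCat.hom_ext
        apply Submodule.linearMap_qext
        ext v
        have := φ.naturality f
        have h1 : (φ.app y).hom ((V.map f).hom v) = (W.map f).hom ((φ.app x).hom v) :=
          congrFun (congrArg (fun (t : V.obj x ⟶ W.obj y) => ⇑t.hom) this) v
        show Submodule.Quotient.mk ((φ.app y).hom ((V.map f).hom v))
          = Submodule.Quotient.mk ((W.map f).hom ((φ.app x).hom v))
        rw [h1] }
  map_id V := by
    apply NatTrans.ext; funext x
    apply ModuleCat.hom_ext
    apply Submodule.linearMap_qext
    ext v
    rfl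
  map_comp {U V W} φ ψ := by
    apply NatTrans.ext; funext x
    apply ModuleCat.hom_ext
    apply Submodule.linearMap_qext
    ext v
    rfl

instance (S : Finset (Fin m)) : (H0S m G k S).Additive where
  map_add := by
    intro V W φ ψ
    apply NatTrans.ext; funext x
    apply ModuleCat.hom_ext
    apply Submodule.linearMap_qext
    ext v
    rfl

/-- The free module `M(x) ⊗ W` on a vector space `W` placed at the object `x`. -/
def freeAt (x : FImG m G) (W : ModuleCat.{0} k) : ModG m G k where
  obj y := ModuleCat.of k ((x ⟶ y) →₀ W)
  map {y z} g := ModuleCat.ofHom (Finsupp.lmapDomain W k (fun α => α ≫ g))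
  map_id y := by
    have h : (fun α : x ⟶ y => α ≫ 𝟙 y) = id := funext fun α => Category.comp_id α
    apply ModuleCat.hom_ext
    show Finsupp.lmapDomain W k (fun α : x ⟶ y => α ≫ 𝟙 y) = _
    rw [h, Finsupp.lmapDomain_id]
    rfl
  map_comp {y z w} g h := by
    have hc : (fun α : x ⟶ y => α ≫ (g ≫ h)) = (fun β : x ⟶ z => β ≫ h) ∘ (fun α : x ⟶ y => α ≫ g) :=
      funext fun α => (Category.assoc α g h).symm
    apply ModuleCat.hom_ext
    show Finsupp.lmapDomain W k (fun α : x ⟶ y => α ≫ (g ≫ h)) = _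
    rw [hc, Finsupp.lmapDomain_comp]
    rfl

/-- The universal property map out of `freeAt x W`. -/
def fromFree {x : FImG m G} {W : ModuleCat.{0} k} {N : ModG m G k} (φ : W →ₗ[k] N.obj x) :
    freeAt m G k x W ⟶ N where
  app y := ModuleCat.ofHom (Finsupp.lsum k (fun α : x ⟶ y => (N.map α).hom.comp φ))
  naturality {y z} g := by
    apply ModuleCat.hom_ext
    apply Finsupp.lhom_ext
    intro α w
    show Finsupp.lsum k (fun β : x ⟶ z => (N.map β).hom.comp φ)
        (Finsupp.mapDomain (fun β => β ≫ g) (Finsupp.single α w))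
      = (N.map g).hom ((Finsupp.lsum k (fun β : x ⟶ y => (N.map β).hom.comp φ)) (Finsupp.single α w))
    rw [Finsupp.mapDomain_single]
    simp only [Finsupp.lsum_single, LinearMap.comp_apply]
    rw [N.map_comp]
    rfl

instance freeAt_projective (x : FImG m G) (W : ModuleCat.{0} k) :
    Projective (freeAt m G k x W) where
  factors {E X} f e he := by
    have hsurj : Function.Surjective (e.app x).hom := by
      rw [← ModuleCat.epi_iff_surjective]
      infer_instance
    haveI : Module.Free k W := Module.Free.of_divisionRing k W
    haveI : Module.Projective k W := Module.Projective.of_free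
    obtain ⟨φ, hφ⟩ := Module.projective_lifting_property (e.app x).hom
      ((f.app x).hom.comp (Finsupp.lsingle (𝟙 x))) hsurj
    refine ⟨fromFree m G k φ, ?_⟩
    apply NatTrans.ext; funext y
    apply ModuleCat.hom_ext
    apply Finsupp.lhom_ext
    intro α w
    show (e.app y).hom ((Finsupp.lsum k (fun β : x ⟶ y => (E.map β).hom.comp φ)) (Finsupp.single α w))
      = (f.app y).hom (Finsupp.single α w)
    rw [Finsupp.lsum_single, LinearMap.comp_apply]
    have h1 : (e.app y).hom ((E.map α).hom (φ w)) = (X.map α).hom ((e.app x).hom (φ w)) :=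
      congrFun (congrArg (fun (t : E.obj x ⟶ X.obj y) => ⇑t.hom) (e.naturality α)) (φ w)
    have h2 : (e.app x).hom (φ w) = (f.app x).hom (Finsupp.single (𝟙 x) w) :=
      congrFun (congrArg (fun (t : W →ₗ[k] X.obj x) => ⇑t) hφ) w
    have h3 : (X.map α).hom ((f.app x).hom (Finsupp.single (𝟙 x) w))
        = (f.app y).hom (((freeAt m G k x W).map α).hom (Finsupp.single (𝟙 x) w)) :=
      (congrFun (congrArg (fun (t : (freeAt m G k x W).obj x ⟶ X.obj y) => ⇑t.hom)
        (f.naturality α)) (Finsupp.single (𝟙 x) w)).symm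
    have h4 : ((freeAt m G k x W).map α).hom (Finsupp.single (𝟙 x) w) = Finsupp.single α w := by
      show Finsupp.mapDomain (fun β : x ⟶ x => β ≫ α) (Finsupp.single (𝟙 x) w)
        = Finsupp.single α w
      rw [Finsupp.mapDomain_single, Category.id_comp]
    rw [h1, h2, h3, h4]

lemma projective_sigma {J : Type} (f : J → ModG m G k) [HasCoproduct f]
    (h : ∀ j, Projective (f j)) : Projective (∐ f) where
  factors {E X} g e he := by
    refine ⟨Sigma.desc fun j => (h j).factors (Sigma.ι f j ≫ g) e |>.choose, ?_⟩
    apply Sigma.hom_ext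
    intro j
    rw [← Category.assoc, colimit.ι_desc]
    exact ((h j).factors (Sigma.ι f j ≫ g) e).choose_spec

/-- The canonical projective cover `⊕_x M(x) ⊗ V(x) ⟶ V`. -/
def coverHom (V : ModG m G k) : (∐ fun x : FImG m G => freeAt m G k x (V.obj x)) ⟶ V :=
  Sigma.desc fun x => fromFree m G k LinearMap.id

instance coverHom_epi (V : ModG m G k) : Epi (coverHom m G k V) := by
  haveI : ∀ y : FImG m G, Epi ((coverHom m G k V).app y) := by
    intro y
    rw [ModuleCat.epi_iff_surjective]
    intro v
    refine ⟨((Sigma.ι (fun x : FImG m G => freeAt m G k x (V.obj x)) y).app y).hom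
      (Finsupp.single (𝟙 y) v), ?_⟩
    have h1 : Sigma.ι (fun x : FImG m G => freeAt m G k x (V.obj x)) y ≫ coverHom m G k V
        = fromFree m G k LinearMap.id := colimit.ι_desc _ _
    have h2 := congrFun (congrArg (fun (t : freeAt m G k y (V.obj y) ⟶ V) => ⇑(t.app y).hom) h1)
      (Finsupp.single (𝟙 y) v)
    refine Eq.trans ?_ (h2.trans ?_)
    · rfl
    · show (Finsupp.lsum k (fun α : y ⟶ y => (V.map α).hom.comp LinearMap.id)) (Finsupp.single (𝟙 y) v) = v
      rw [Finsupp.lsum_single, LinearMap.comp_apply, LinearMap.id_apply, V.map_id]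
      rfl
  exact NatTrans.epi_of_epi_app _

instance : EnoughProjectives (ModG m G k) where
  presentation V := ⟨{
    p := ∐ fun x : FImG m G => freeAt m G k x (V.obj x)
    projective := projective_sigma m G k _ fun x => freeAt_projective m G k x (V.obj x)
    f := coverHom m G k V
    epi := coverHom_epi m G k V }⟩

/-- The `i`-th `S`-homology functor `H_i^S`, the `i`-th left derived functor of `H_0^S`. -/
def HiS (S : Finset (Fin m)) (i : ℕ) : ModG m G k ⥤ ModG m G k :=
  (H0S m G k S).leftDerived i

/-- The slice `W[[s]]` of a module on the object `s` of `C^S` is nonzero. -/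
def SliceNonzero (S : Finset (Fin m)) (W : ModG m G k) (s : Fin m → ℕ) : Prop :=
  ∃ x : FImG m G, (∀ j ∈ S, x.1.comp j = s j) ∧ Nontrivial (W.obj x)

/-- The `i`-th `S`-homological degree `t_i^S(V)`, the supremum of the `S`-degrees of
objects `s` of `C^S` with `H_i^S(V)[[s]] ≠ 0` (with `⊥` playing the role of `−1` when
there is no such object). -/
def tS (S : Finset (Fin m)) (i : ℕ) (V : ModG m G k) : WithBot ℕ∞ :=
  sSup ((fun s : Fin m → ℕ => (((∑ j ∈ S, s j : ℕ) : ℕ∞) : WithBot ℕ∞)) ''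
    {s | SliceNonzero m G k S ((HiS m G k S i).obj V) s})

/-! ### Plain `C^m`-modules (no group factor) -/

/-- The category of `C^m`-modules over `k`. -/
abbrev ModM := FImObj m ⥤ ModuleCat.{0} k

instance : HasFiniteBiproducts (ModM m k) := Abelian.hasFiniteBiproducts

/-- The category of `C`-modules (`FI`-modules) over `k`. -/
abbrev ModC := FIObj ⥤ ModuleCat.{0} k

instance : HasFiniteBiproducts (ModC k) := Abelian.hasFiniteBiproducts

/-- The shift functor `Σ_e` on `C^m`-modules. -/
def sigmaFM (e : Fin m → ℕ) : ModM m k ⥤ ModM m k :=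
  (Functor.whiskeringLeft _ _ _).obj (addF m e)

/-- The canonical inclusion `x ⟶ ι_e(x)` in `C^m`. -/
def incHomM (e : Fin m → ℕ) (x : FImObj m) : x ⟶ (addF m e).obj x :=
  fun j => ⟨Fin.castAdd (e j), fun u v huv => by simpa [Fin.ext_iff] using congrArg Fin.val huv⟩

lemma incHomM_naturality (e : Fin m → ℕ) {x y : FImObj m} (f : x ⟶ y) :
    incHomM m e x ≫ (addF m e).map f = f ≫ incHomM m e y := by
  funext j
  ext t
  simp [incHomM, addF]
  exact congrArg Fin.val (shiftEmb_castAdd _ _ _)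

/-- The natural inclusion `V ⟶ Σ_e V` for a `C^m`-module `V`. -/
def incMapVM (e : Fin m → ℕ) (V : ModM m k) : V ⟶ (sigmaFM m k e).obj V where
  app x := V.map (incHomM m e x)
  naturality x y f := by
    dsimp [sigmaFM]
    rw [← V.map_comp, ← V.map_comp, incHomM_naturality]

/-- The derivative `D_e V`, the cokernel of `V ⟶ Σ_e V`, for a `C^m`-module `V`. -/
def DobjM (e : Fin m → ℕ) (V : ModM m k) : ModM m k :=
  cokernel (incMapVM m k e V)

/-- The free `C^m`-module `M(x)` at the object `x`. -/
def RepMM (x : FImObj m) : ModM m k :=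
  coyoneda.obj (Opposite.op x) ⋙ ModuleCat.free k

/-- Finite generation for `C^m`-modules. -/
def FinitelyGeneratedM (V : ModM m k) : Prop :=
  ∃ (r : ℕ) (xs : Fin r → FImObj m) (p : (⨁ fun a => RepMM m k (xs a)) ⟶ V), Epi p

/-- The free `C`-module `M(x)` at an object `x` of `FI`. -/
def RepMC (x : FIObj) : ModC k :=
  coyoneda.obj (Opposite.op x) ⋙ ModuleCat.free k

/-- Finite generation for `C`-modules. -/
def FinitelyGeneratedC (V : ModC k) : Prop :=
  ∃ (r : ℕ) (xs : Fin r → FIObj) (p : (⨁ fun a => RepMC k (xs a)) ⟶ V), Epi p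

/-- The external tensor product `I₁ ⊠ ⋯ ⊠ I_m` of `C`-modules, a `C^m`-module. -/
def extProd (I : Fin m → ModC k) : ModM m k where
  obj x := ModuleCat.of k (⨂[k] j, (I j).obj ⟨x.comp j⟩)
  map {x y} f := ModuleCat.ofHom (PiTensorProduct.map (fun j => ((I j).map (f j)).hom))
  map_id x := by
    have h : (fun j => ((I j).map ((𝟙 x : x ⟶ x) j)).hom) = fun j => LinearMap.id := by
      funext j
      show ((I j).map (𝟙 (⟨x.comp j⟩ : FIObj))).hom = LinearMap.id
      rw [(I j).map_id]
      rfl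
    apply ModuleCat.hom_ext
    show PiTensorProduct.map (fun j => ((I j).map ((𝟙 x : x ⟶ x) j)).hom) = _
    rw [h, PiTensorProduct.map_id]
    rfl
  map_comp {x y z} f g := by
    have h : (fun j => ((I j).map ((f ≫ g) j)).hom)
        = fun j => ((I j).map (g j)).hom.comp ((I j).map (f j)).hom := by
      funext j
      show ((I j).map ((f j : (⟨x.comp j⟩ : FIObj) ⟶ ⟨y.comp j⟩) ≫ (g j))).hom = _
      rw [(I j).map_comp]
      rfl
    apply ModuleCat.hom_ext
    show PiTensorProduct.map (fun j => ((I j).map ((f ≫ g) j)).hom) = _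
    rw [h, PiTensorProduct.map_comp]
    rfl

/-- The `C^m_G`-module `V ⊠ kG`, where `kG` carries the (left regular) `G`-action. -/
def tensorG (V : ModM m k) : ModG m G k where
  obj x := ModuleCat.of k (TensorProduct k (V.obj x.1) (MonoidAlgebra k G))
  map {x y} f := ModuleCat.ofHom (TensorProduct.map (V.map f.1).hom (Representation.ofMulAction k G G f.2))
  map_id x := by
    have h1 : (V.map (𝟙 x.1)).hom = LinearMap.id := by rw [V.map_id]; rfl
    have h2 : Representation.ofMulAction k G G (1 : G) = LinearMap.id := by
      rw [map_one]; rfl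
    apply ModuleCat.hom_ext
    show TensorProduct.map (V.map (𝟙 x.1)).hom (Representation.ofMulAction k G G (1 : G)) = _
    rw [h1, h2, TensorProduct.map_id]
    rfl
  map_comp {x y z} f g := by
    have h1 : (V.map ((f ≫ g).1)).hom = (V.map g.1).hom.comp (V.map f.1).hom := by
      rw [show (f ≫ g).1 = f.1 ≫ g.1 from rfl, V.map_comp]; rfl
    have h2 : Representation.ofMulAction k G G ((f ≫ g).2)
        = (Representation.ofMulAction k G G g.2).comp (Representation.ofMulAction k G G f.2) := by
      show Representation.ofMulAction k G G (g.2 * f.2) = _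
      rw [map_mul]; rfl
    apply ModuleCat.hom_ext
    show TensorProduct.map (V.map ((f ≫ g).1)).hom (Representation.ofMulAction k G G ((f ≫ g).2)) = _
    rw [h1, h2, TensorProduct.map_comp]
    rfl

end

section Shift

variable {m : ℕ} {G : Type} [Group G] {k : Type} [Field k]

lemma degS_addFG_map (e : Fin m → ℕ) (T : Finset (Fin m)) {x y : FImG m G} (α : x ⟶ y) :
    degS m G T ((addFG m G e).map α) = degS m G T α := by
  unfold degS
  refine Finset.sum_congr rfl fun j _ => ?_
  change ((y.1.comp j + e j : ℕ) : ℤ) - ((x.1.comp j + e j : ℕ) : ℤ) = _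
  push_cast
  ring

/-- `(Σ_e V)(x)` is `V(ι_e x)` on the nose, so `ι_e(α)` is a torsion witness for `v` in `V`. -/
lemma IsTorsionElt.of_sigmaF (e : Fin m → ℕ) {S : Finset (Fin m)} {V : ModG m G k}
    {x : FImG m G} {v : ((sigmaF m G k e).obj V).obj x}
    (hv : IsTorsionElt m G k S ((sigmaF m G k e).obj V) v) :
    IsTorsionElt (x := (addFG m G e).obj x) m G k S V v := by
  obtain ⟨y, α, hdeg, hdegc, hα⟩ := hv
  exact ⟨(addFG m G e).obj y, (addFG m G e).map α,
    by rwa [degS_addFG_map], by rwa [degS_addFG_map], hα⟩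

lemma STorsionFree.sigmaF {S : Finset (Fin m)} {V : ModG m G k} (hV : STorsionFree m G k S V)
    (e : Fin m → ℕ) : STorsionFree m G k S ((sigmaF m G k e).obj V) :=
  fun _ _ hv => hV _ _ (hv.of_sigmaF e)

end Shift

section Statements

open CategoryTheory Limits

theorem FIm.shift_preserves_torsionFree_general (m : ℕ) (G : Type) [Group G]
    (k : Type) [Field k] (S : Finset (Fin m))
    (V : ModG m G k) (hV : STorsionFree m G k S V) :
    ∀ i ∈ S, STorsionFree m G k S ((sigmaF m G k (Pi.single i 1)).obj V) :=
  fun i _ => hV.sigmaF (Pi.single i 1)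

theorem FIm.shift_preserves_torsionFree (m : ℕ) (hm : 0 < m) (G : Type) [Group G] [Finite G]
    (k : Type) [Field k] [CharZero k] (S : Finset (Fin m)) (hS : S.Nonempty)
    (V : ModG m G k) (hV : STorsionFree m G k S V) :
    ∀ i ∈ S, STorsionFree m G k S ((sigmaF m G k (Pi.single i 1)).obj V) :=
  FIm.shift_preserves_torsionFree_general m G k S V hV

end Statements
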